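/- (Lemma 9) Let μ ≥ 0 and κ ≥ 1, let θ ∈ ℝ^d, let Σ be positive definite, and let Y ⊆ ℝ^m. Suppose θ − θ* ∈ S(μ, Y; Σ), and suppose x₁, x₂, x₃ are optimal solutions of the robust optimization problems with shape Σ and with (scale, center) equal to ((κ−1)μ, θ*), (κμ, θ), and ((κ+1)μ, θ*) respectively, with x₁, x₂, x₃ ∈ Y. Then f*(x₁) ≤ f*(x₂) ≤ f*(x₃). -/

import Mathlib

open MeasureTheory ProbabilityTheory Matrix
open scoped ENNReal Pointwise

/-- The ellipsoid `U_Σ = {u : uᵀ Σ⁻¹ u ≤ 1}`. -/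
def USet {d : ℕ} (Sg : Matrix (Fin d) (Fin d) ℝ) : Set (Fin d → ℝ) :=
  {u | u ⬝ᵥ (Sg⁻¹ *ᵥ u) ≤ 1}

/-- `r_k(x; Σ) = max_{u ∈ U_Σ} g_k(x, u)` where `g_k(x, θ) = θᵀ v_k(x)`. -/
noncomputable def rk {d m K : ℕ} (v : Fin K → (Fin m → ℝ) → (Fin d → ℝ))
    (k : Fin K) (x : Fin m → ℝ) (Sg : Matrix (Fin d) (Fin d) ℝ) : ℝ :=
  sSup ((fun u => u ⬝ᵥ v k x) '' USet Sg)

/-- `S(λ, Y; Σ)`, the set of parameter errors that are uniformly small over `Y`. -/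
noncomputable def SErr {d m K : ℕ} (v : Fin K → (Fin m → ℝ) → (Fin d → ℝ))
    (lam : ℝ) (Y : Set (Fin m → ℝ)) (Sg : Matrix (Fin d) (Fin d) ℝ) : Set (Fin d → ℝ) :=
  {Δ | ∀ k, ∀ y ∈ Y, |Δ ⬝ᵥ v k y| ≤ lam * rk v k y Sg}

/-- Feasibility for the robust optimization problem with scale `lam`, center `θ`, shape `Σ`. -/
def Feasible {d m K : ℕ} (X : Set (Fin m → ℝ)) (v : Fin K → (Fin m → ℝ) → (Fin d → ℝ))
    (lam : ℝ) (θ : Fin d → ℝ) (Sg : Matrix (Fin d) (Fin d) ℝ) (x : Fin m → ℝ) : Prop :=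
  x ∈ X ∧ ∀ k, ∀ u ∈ USet Sg, 0 ≤ (θ + lam • u) ⬝ᵥ v k x

/-- Optimal solution of the robust optimization problem. -/
def IsOptimal {d m K : ℕ} (X : Set (Fin m → ℝ)) (f : (Fin m → ℝ) → ℝ)
    (v : Fin K → (Fin m → ℝ) → (Fin d → ℝ))
    (lam : ℝ) (θ : Fin d → ℝ) (Sg : Matrix (Fin d) (Fin d) ℝ) (x : Fin m → ℝ) : Prop :=
  Feasible X v lam θ Sg x ∧ ∀ y, Feasible X v lam θ Sg y → f x ≤ f y

open Classical in
/-- The true objective `f*`, which is `∞` when a true constraint is violated. -/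
noncomputable def fStar {d m K : ℕ} (f : (Fin m → ℝ) → ℝ)
    (v : Fin K → (Fin m → ℝ) → (Fin d → ℝ)) (θs : Fin d → ℝ) (x : Fin m → ℝ) : EReal :=
  if ∀ k, 0 ≤ θs ⬝ᵥ v k x then (f x : EReal) else ⊤

/-- The standard Gaussian measure on `ℝ^d`. -/
noncomputable def stdGaussian (d : ℕ) : Measure (Fin d → ℝ) :=
  Measure.pi fun _ => gaussianReal 0 1

open Classical in
/-- The positive semidefinite square root (junk value `0` off the psd cone). -/
noncomputable def matSqrt {d : ℕ} (A : Matrix (Fin d) (Fin d) ℝ) : Matrix (Fin d) (Fin d) ℝ :=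
  if h : A.PosSemidef then
    (h.1.eigenvectorUnitary : Matrix (Fin d) (Fin d) ℝ) *
      diagonal ((↑) ∘ (√·) ∘ h.1.eigenvalues) *
      (star h.1.eigenvectorUnitary : Matrix (Fin d) (Fin d) ℝ)
  else 0

/-- The centered Gaussian measure on `ℝ^d` with covariance `A`. -/
noncomputable def gaussOf {d : ℕ} (A : Matrix (Fin d) (Fin d) ℝ) : Measure (Fin d → ℝ) :=
  (stdGaussian d).map (fun z => matSqrt A *ᵥ z)

/-- The Euclidean norm on `Fin d → ℝ`. -/
noncomputable def euclNorm {d : ℕ} (z : Fin d → ℝ) : ℝ := Real.sqrt (∑ i, z i ^ 2)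

/-- Quantile function of the chi distribution with `d` degrees of freedom. -/
noncomputable def chiQuantile (d : ℕ) (p : ℝ) : ℝ :=
  sInf {t : ℝ | 0 ≤ t ∧ p ≤ (stdGaussian d {z | euclNorm z ≤ t}).toReal}

/-- The minimum spatial uniform bound `μ(p, Y; P, Σ)` (`⊤` when infeasible, `0` for `p ≤ 0`). -/
noncomputable def muB {d m K : ℕ} (v : Fin K → (Fin m → ℝ) → (Fin d → ℝ)) (p : ℝ)
    (Y : Set (Fin m → ℝ)) (P : Measure (Fin d → ℝ)) (Sg : Matrix (Fin d) (Fin d) ℝ) : ℝ≥0∞ :=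
  ⨅ (μ : ℝ) (_ : 0 ≤ μ ∧ ENNReal.ofReal p ≤ P (SErr v μ Y Sg)), ENNReal.ofReal μ

/-! Robust feasibility with scale `c ≥ 0` and center `θ` says exactly `c r_k(x) ≤ θᵀv_k(x)` for
all `k`. If `θ' − θ ∈ S(μ, Y; Σ)` and `x ∈ Y`, the centers differ at `x` by at most `μ r_k(x)`,
so feasibility at scale `c + μ` around `θ` implies feasibility at scale `c` around `θ'`. Hence
`x₂` is feasible for the first problem and `x₃` for the second, which gives
`f(x₁) ≤ f(x₂) ≤ f(x₃)`; `x₁` and `x₂` are truly feasible (take `u = 0`), so `f*` agrees with `f`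
there. -/

section Ellipsoid

variable {d : ℕ} {Sg : Matrix (Fin d) (Fin d) ℝ}

lemma zero_mem_USet : (0 : Fin d → ℝ) ∈ USet Sg := by
  simp [USet]

lemma neg_mem_USet {u : Fin d → ℝ} (hu : u ∈ USet Sg) : -u ∈ USet Sg := by
  simpa [USet, mulVec_neg] using hu

/-- Expand `0 ≤ (u - Σw)ᵀ Σ⁻¹ (u - Σw)`. -/
lemma two_mul_dotProduct_le_of_mem_USet (hSg : Sg.PosDef) {u : Fin d → ℝ} (hu : u ∈ USet Sg)
    (w : Fin d → ℝ) : 2 * (u ⬝ᵥ w) ≤ 1 + w ⬝ᵥ (Sg *ᵥ w) := by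
  have hinv : Sg⁻¹ * Sg = 1 := nonsing_inv_mul _ hSg.det_pos.ne'.isUnit
  have hsymm : (Sg⁻¹)ᵀ = Sg⁻¹ := hSg.inv.isHermitian.eq
  have hquad := hSg.inv.posSemidef.dotProduct_mulVec_nonneg (u - Sg *ᵥ w)
  have hback : Sg⁻¹ *ᵥ (Sg *ᵥ w) = w := by rw [mulVec_mulVec, hinv, one_mulVec]
  have hcross : (Sg *ᵥ w) ⬝ᵥ (Sg⁻¹ *ᵥ u) = u ⬝ᵥ w := by
    rw [dotProduct_mulVec, ← mulVec_transpose, hsymm, hback, dotProduct_comm]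
  simp only [star_trivial, mulVec_sub, sub_dotProduct, dotProduct_sub, hback, hcross] at hquad
  have hu' : u ⬝ᵥ (Sg⁻¹ *ᵥ u) ≤ 1 := hu
  linarith [dotProduct_comm (Sg *ᵥ w) w]

lemma bddAbove_image_USet (hSg : Sg.PosDef) (w : Fin d → ℝ) :
    BddAbove ((fun u => u ⬝ᵥ w) '' USet Sg) := by
  refine ⟨(1 + w ⬝ᵥ (Sg *ᵥ w)) / 2, ?_⟩
  rintro _ ⟨u, hu, rfl⟩
  linarith [two_mul_dotProduct_le_of_mem_USet hSg hu w]

end Ellipsoid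

section RobustConstraint

variable {d m K : ℕ} {v : Fin K → (Fin m → ℝ) → (Fin d → ℝ)} {Sg : Matrix (Fin d) (Fin d) ℝ}

lemma le_rk (hSg : Sg.PosDef) (k : Fin K) (x : Fin m → ℝ) {u : Fin d → ℝ} (hu : u ∈ USet Sg) :
    u ⬝ᵥ v k x ≤ rk v k x Sg :=
  le_csSup (bddAbove_image_USet hSg (v k x)) ⟨u, hu, rfl⟩

lemma rk_nonneg (hSg : Sg.PosDef) (k : Fin K) (x : Fin m → ℝ) : 0 ≤ rk v k x Sg := by
  simpa using le_rk (v := v) hSg k x zero_mem_USet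

lemma feasible_iff {X : Set (Fin m → ℝ)} {c : ℝ} {θ : Fin d → ℝ} {x : Fin m → ℝ}
    (hSg : Sg.PosDef) (hc : 0 ≤ c) :
    Feasible X v c θ Sg x ↔ x ∈ X ∧ ∀ k, c * rk v k x Sg ≤ θ ⬝ᵥ v k x := by
  simp only [Feasible, add_dotProduct, smul_dotProduct, smul_eq_mul]
  refine and_congr_right fun _ => forall_congr' fun k => ⟨fun h => ?_, fun h u hu => ?_⟩
  · rw [rk, ← smul_eq_mul, ← Real.sSup_smul_of_nonneg hc, ← Set.image_smul, Set.image_image]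
    refine csSup_le (Set.image_nonempty.mpr ⟨0, zero_mem_USet⟩) ?_
    rintro _ ⟨u, hu, rfl⟩
    have := h (-u) (neg_mem_USet hu)
    rw [neg_dotProduct, mul_neg] at this
    show c * (u ⬝ᵥ v k x) ≤ _
    linarith
  · have := le_rk (v := v) hSg k x (neg_mem_USet hu)
    rw [neg_dotProduct] at this
    nlinarith

lemma Feasible.dotProduct_nonneg {X : Set (Fin m → ℝ)} {c : ℝ} {θ : Fin d → ℝ} {x : Fin m → ℝ}
    (h : Feasible X v c θ Sg x) (k : Fin K) : 0 ≤ θ ⬝ᵥ v k x := by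
  simpa using h.2 k 0 zero_mem_USet

lemma neg_mem_SErr {μ : ℝ} {Y : Set (Fin m → ℝ)} {Δ : Fin d → ℝ} (h : Δ ∈ SErr v μ Y Sg) :
    -Δ ∈ SErr v μ Y Sg := fun k y hy => by
  simpa [neg_dotProduct] using h k y hy

lemma Feasible.recenter {X Y : Set (Fin m → ℝ)} {c c' μ : ℝ} {θ θ' : Fin d → ℝ}
    {x : Fin m → ℝ} (hSg : Sg.PosDef) (hc : 0 ≤ c) (hμ : 0 ≤ μ) (hcc' : c + μ ≤ c')
    (hΔ : θ' - θ ∈ SErr v μ Y Sg) (hx : x ∈ Y) (h : Feasible X v c' θ Sg x) :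
    Feasible X v c θ' Sg x := by
  obtain ⟨hxX, hθ⟩ := (feasible_iff hSg (by linarith)).mp h
  refine (feasible_iff hSg hc).mpr ⟨hxX, fun k => ?_⟩
  have hr := rk_nonneg (v := v) hSg k x
  have hΔk := (abs_le.mp (hΔ k x hx)).1
  rw [sub_dotProduct] at hΔk
  nlinarith [hθ k]

end RobustConstraint

lemma fStar_le_fStar {d m K : ℕ} {f : (Fin m → ℝ) → ℝ} {v : Fin K → (Fin m → ℝ) → (Fin d → ℝ)}
    {θs : Fin d → ℝ} {x y : Fin m → ℝ} (hx : ∀ k, 0 ≤ θs ⬝ᵥ v k x) (hf : f x ≤ f y) :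
    fStar f v θs x ≤ fStar f v θs y := by
  rw [fStar, if_pos hx, fStar]
  split_ifs
  · exact EReal.coe_le_coe_iff.mpr hf
  · exact le_top

theorem stmt4_general {d m K : ℕ}
    (θstar : Fin d → ℝ) (v : Fin K → (Fin m → ℝ) → (Fin d → ℝ))
    (X : Set (Fin m → ℝ)) (f : (Fin m → ℝ) → ℝ)
    (μ : ℝ) (hμ : 0 ≤ μ) (κ : ℝ) (hκ : 1 ≤ κ) (θ : Fin d → ℝ)
    (Sg : Matrix (Fin d) (Fin d) ℝ) (hSg : Sg.PosDef)
    (Y : Set (Fin m → ℝ))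
    (hθ : θ - θstar ∈ SErr v μ Y Sg)
    (x₁ x₂ x₃ : Fin m → ℝ)
    (h1 : IsOptimal X f v ((κ - 1) * μ) θstar Sg x₁)
    (h2 : IsOptimal X f v (κ * μ) θ Sg x₂)
    (h3 : IsOptimal X f v ((κ + 1) * μ) θstar Sg x₃)
    (hx₂Y : x₂ ∈ Y) (hx₃Y : x₃ ∈ Y) :
    fStar f v θstar x₁ ≤ fStar f v θstar x₂ ∧ fStar f v θstar x₂ ≤ fStar f v θstar x₃ := by
  have hx₂ : Feasible X v ((κ - 1) * μ) θstar Sg x₂ :=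
    h2.1.recenter hSg (mul_nonneg (by linarith) hμ) hμ (by linarith)
      (by simpa using neg_mem_SErr hθ) hx₂Y
  have hx₃ : Feasible X v (κ * μ) θ Sg x₃ :=
    h3.1.recenter hSg (mul_nonneg (by linarith) hμ) hμ (by linarith) hθ hx₃Y
  exact ⟨fStar_le_fStar h1.1.dotProduct_nonneg (h1.2 x₂ hx₂),
    fStar_le_fStar hx₂.dotProduct_nonneg (h2.2 x₃ hx₃)⟩

/-- Lemma 9: with `θ − θ* ∈ S(μ, Y; Σ)` and optimal solutions `x₁, x₂, x₃`
for scales `(κ−1)μ, κμ, (κ+1)μ` and centers `θ*, θ, θ*` all lying in `Y`,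
one has `f*(x₁) ≤ f*(x₂) ≤ f*(x₃)`. -/
theorem stmt4 {d m K : ℕ} (hd : 1 ≤ d) (hm : 1 ≤ m) (hK : 1 ≤ K)
    (θstar : Fin d → ℝ) (v : Fin K → (Fin m → ℝ) → (Fin d → ℝ))
    (X : Set (Fin m → ℝ)) (f : (Fin m → ℝ) → ℝ)
    (μ : ℝ) (hμ : 0 ≤ μ) (κ : ℝ) (hκ : 1 ≤ κ) (θ : Fin d → ℝ)
    (Sg : Matrix (Fin d) (Fin d) ℝ) (hSg : Sg.PosDef)
    (Y : Set (Fin m → ℝ))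
    (hθ : θ - θstar ∈ SErr v μ Y Sg)
    (x₁ x₂ x₃ : Fin m → ℝ)
    (h1 : IsOptimal X f v ((κ - 1) * μ) θstar Sg x₁)
    (h2 : IsOptimal X f v (κ * μ) θ Sg x₂)
    (h3 : IsOptimal X f v ((κ + 1) * μ) θstar Sg x₃)
    (hx₁Y : x₁ ∈ Y) (hx₂Y : x₂ ∈ Y) (hx₃Y : x₃ ∈ Y) :
    fStar f v θstar x₁ ≤ fStar f v θstar x₂ ∧ fStar f v θstar x₂ ≤ fStar f v θstar x₃ :=
  stmt4_general θstar v X f μ hμ κ hκ θ Sg hSg Y hθ x₁ x₂ x₃ h1 h2 h3 hx₂Y hx₃Y
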